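/- arXiv:1711.06300 — 7 statements merged into one kernel-verified Lean document; each statement's English description precedes it below -/
import Mathlib

section
/- Let M(λ) = λM_1 + M_0 be a (q+1)m × (p+1)n pencil over a field F, viewed as a (q+1)×(p+1) block matrix with m×n blocks, and set k = p+q+1. Then (Λ_q(λ)^T ⊗ I_m) M(λ) (Λ_p(λ) ⊗ I_n) = P(λ) for a given matrix polynomial P(λ) = Σ_{i=0}^k A_i λ^i ∈ F[λ]^{m×n} if and only if for every s ∈ {0,...,k} the antidiagonal sum AS(M,s) := Σ_{i+j=k+2-s} [M_1]_{ij} + Σ_{i+j=k+1-s} [M_0]_{ij} equals A_s. -/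
open Polynomial Matrix

/-!
Entrywise, `(Λ_q(λ)ᵀ ⊗ I_m) M(λ) (Λ_p(λ) ⊗ I_n)` is `∑ᵢⱼ λ^(q-i) (λ [M₁]ᵢⱼ + [M₀]ᵢⱼ) λ^(p-j)`,
so its coefficient of `λ^s` collects exactly the blocks `[M₁]ᵢⱼ` with `i + j + s = k` and
`[M₀]ᵢⱼ` with `i + j + s + 1 = k` (0-based block indices): it is the antidiagonal sum `AS(M, s)`.
Two matrix polynomials agree iff all their coefficients do, and `AS(M, s)` vanishes for `s > k`,
where the coefficients of `P` vanish too.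
-/

theorem Matrix.ext_iff_coeff {R m n : Type*} [Semiring R] {P Q : Matrix m n R[X]} :
    P = Q ↔ ∀ s, P.map (coeff · s) = Q.map (coeff · s) := by
  refine ⟨fun h s => h ▸ rfl, fun h => ?_⟩
  ext i j s
  exact congrFun (congrFun (h s) i) j

theorem Matrix.kronecker_row_mul_mul_kronecker_col_apply {S ι κ m n : Type*} [CommSemiring S]
    [Fintype ι] [Fintype κ] [Fintype m] [Fintype n] [DecidableEq m] [DecidableEq n]
    (u : ι → S) (v : κ → S) (M : Matrix (ι × m) (κ × n) S) (r : m) (c : n) :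
    (of (fun (r : m) (ir : ι × m) => if r = ir.2 then u ir.1 else 0) * M *
        of (fun (jc : κ × n) (c : n) => if jc.2 = c then v jc.1 else 0)) r c =
      ∑ i, ∑ j, u i * M (i, r) (j, c) * v j := by
  simp only [mul_apply, of_apply, Fintype.sum_prod_type, ite_mul, zero_mul, mul_ite, mul_zero,
    Finset.sum_ite_eq, Finset.sum_ite_eq', Finset.mem_univ, if_true, Finset.sum_mul]
  exact Finset.sum_comm

theorem Polynomial.coeff_X_pow_mul_X_mul_C_add_C_mul_X_pow {R : Type*} [CommSemiring R]
    (a b : R) (d e s : ℕ) :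
    (X ^ d * (X * C a + C b) * X ^ e).coeff s =
      (if s = d + e + 1 then a else 0) + (if s = d + e then b else 0) := by
  have expand : X ^ d * (X * C a + C b) * X ^ e = C a * X ^ (d + e + 1) + C b * X ^ (d + e) := by
    ring
  simp only [expand, coeff_add, coeff_C_mul, coeff_X_pow, mul_ite, mul_one, mul_zero]

theorem Polynomial.coeff_sum_range_C_mul_X_pow {R : Type*} [Semiring R] (a : ℕ → R) (k s : ℕ) :
    (∑ i ∈ Finset.range (k + 1), C (a i) * X ^ i).coeff s = if s ≤ k then a s else 0 := by
  simp only [finsetSum_coeff, coeff_C_mul, coeff_X_pow, mul_ite, mul_one, mul_zero,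
    Finset.sum_ite_eq, Finset.mem_range, Nat.lt_succ_iff]

section AntidiagonalSum

variable {R : Type*} [AddCommMonoid R] {m n p q : ℕ}

/-- `AS(M, s)` for the pencil `λ M₁ + M₀`, with 0-based block indices. -/
def antidiagonalSum (M1 M0 : Matrix (Fin (q + 1) × Fin m) (Fin (p + 1) × Fin n) R) (s : ℕ) :
    Matrix (Fin m) (Fin n) R :=
  (∑ i : Fin (q + 1), ∑ j : Fin (p + 1),
      if (i : ℕ) + (j : ℕ) + s = p + q + 1 then of fun a b => M1 (i, a) (j, b) else 0) +
    ∑ i : Fin (q + 1), ∑ j : Fin (p + 1),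
      if (i : ℕ) + (j : ℕ) + s + 1 = p + q + 1 then of fun a b => M0 (i, a) (j, b) else 0

theorem antidiagonalSum_apply (M1 M0 : Matrix (Fin (q + 1) × Fin m) (Fin (p + 1) × Fin n) R)
    (s : ℕ) (r : Fin m) (c : Fin n) :
    antidiagonalSum M1 M0 s r c =
      ∑ i : Fin (q + 1), ∑ j : Fin (p + 1),
        ((if (i : ℕ) + (j : ℕ) + s = p + q + 1 then M1 (i, r) (j, c) else 0) +
          if (i : ℕ) + (j : ℕ) + s + 1 = p + q + 1 then M0 (i, r) (j, c) else 0) := by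
  simp only [antidiagonalSum, Matrix.add_apply, Matrix.sum_apply,
    apply_ite (fun M : Matrix _ _ R => M r c), of_apply, Matrix.zero_apply, Finset.sum_add_distrib]

theorem antidiagonalSum_eq_zero (M1 M0 : Matrix (Fin (q + 1) × Fin m) (Fin (p + 1) × Fin n) R)
    {s : ℕ} (hs : p + q + 1 < s) : antidiagonalSum M1 M0 s = 0 := by
  ext r c
  rw [antidiagonalSum_apply]
  exact Finset.sum_eq_zero fun i _ => Finset.sum_eq_zero fun j _ => by
    rw [if_neg (by omega), if_neg (by omega), add_zero]

end AntidiagonalSum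

theorem coeff_kronecker_mul_pencil_mul_kronecker_eq_antidiagonalSum {R : Type*} [CommSemiring R]
    {m n p q : ℕ} (M1 M0 : Matrix (Fin (q + 1) × Fin m) (Fin (p + 1) × Fin n) R) (s : ℕ) :
    ((of fun (r : Fin m) (ir : Fin (q + 1) × Fin m) =>
          if r = ir.2 then (X : R[X]) ^ (q - (ir.1 : ℕ)) else 0) *
        (of fun (ir : Fin (q + 1) × Fin m) (jc : Fin (p + 1) × Fin n) =>
          X * C (M1 ir jc) + C (M0 ir jc)) *
        of fun (jc : Fin (p + 1) × Fin n) (c : Fin n) =>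
          if jc.2 = c then (X : R[X]) ^ (p - (jc.1 : ℕ)) else 0).map (coeff · s) =
      antidiagonalSum M1 M0 s := by
  ext r c
  rw [map_apply, kronecker_row_mul_mul_kronecker_col_apply (fun i : Fin (q + 1) => X ^ (q - i))
    (fun j : Fin (p + 1) => X ^ (p - j)), antidiagonalSum_apply]
  simp only [of_apply, finsetSum_coeff, coeff_X_pow_mul_X_mul_C_add_C_mul_X_pow]
  refine Finset.sum_congr rfl fun i _ => Finset.sum_congr rfl fun j _ => ?_
  have hi := i.is_le
  have hj := j.is_le
  congr 1 <;> exact if_congr (by omega) rfl rfl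

/-- for a pencil `M(λ) = λ M₁ + M₀` of size `(q+1)m × (p+1)n`,
viewed as a block matrix with `m × n` blocks, and `k = p+q+1`, one has
`(Λ_q(λ) ⊗ I_m) M(λ) (Λ_p(λ)^T ⊗ I_n) = P(λ)` if and only if `M(λ)` satisfies
the antidiagonal sum condition `AS(M,s) = A_s` for all `s ∈ {0,...,k}`.
(In 0-based block indices, the condition `i+j = k+2-s` for `M₁` reads
`i+j+s = k` and `i+j = k+1-s` for `M₀` reads `i+j+s+1 = k`.) -/
theorem stmt4 (F : Type*) [Field F] (m n p q : ℕ)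
    (M1 M0 : Matrix (Fin (q + 1) × Fin m) (Fin (p + 1) × Fin n) F)
    (A : ℕ → Matrix (Fin m) (Fin n) F) :
    ((Matrix.of fun (r : Fin m) (jc : Fin (q + 1) × Fin m) =>
        if r = jc.2 then (X : Polynomial F) ^ (q - (jc.1 : ℕ)) else 0) *
      (Matrix.of fun (ir : Fin (q + 1) × Fin m) (jc : Fin (p + 1) × Fin n) =>
        X * C (M1 ir jc) + C (M0 ir jc)) *
      (Matrix.of fun (jc : Fin (p + 1) × Fin n) (c : Fin n) =>
        if jc.2 = c then (X : Polynomial F) ^ (p - (jc.1 : ℕ)) else 0) =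
      Matrix.of fun (r : Fin m) (c : Fin n) =>
        ∑ i ∈ Finset.range (p + q + 2), C (A i r c) * X ^ i)
    ↔ (∀ s : ℕ, s ≤ p + q + 1 →
        (∑ i : Fin (q + 1), ∑ j : Fin (p + 1),
          (if (i : ℕ) + (j : ℕ) + s = p + q + 1 then
            Matrix.of (fun (a : Fin m) (b : Fin n) => M1 (i, a) (j, b)) else 0)) +
        (∑ i : Fin (q + 1), ∑ j : Fin (p + 1),
          (if (i : ℕ) + (j : ℕ) + s + 1 = p + q + 1 then
            Matrix.of (fun (a : Fin m) (b : Fin n) => M0 (i, a) (j, b)) else 0)) =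
        A s) := by
  have coeff_P (s : ℕ) : (of fun (r : Fin m) (c : Fin n) =>
      ∑ i ∈ Finset.range (p + q + 2), C (A i r c) * X ^ i).map (coeff · s) =
        if s ≤ p + q + 1 then A s else 0 := by
    ext r c
    rw [map_apply, of_apply, coeff_sum_range_C_mul_X_pow (A · r c) (p + q + 1) s]
    split_ifs <;> rfl
  simp only [ext_iff_coeff, coeff_kronecker_mul_pencil_mul_kronecker_eq_antidiagonalSum, coeff_P]
  refine forall_congr' fun s => ?_
  by_cases hs : s ≤ p + q + 1
  · simp only [hs, if_true, true_imp_iff, antidiagonalSum]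
  · simp only [hs, if_false, false_imp_iff, iff_true]
    exact antidiagonalSum_eq_zero M1 M0 (by omega)
end

section
/- Let Q(λ) = Σ_{i=0}^d Q_i λ^i be an n×n matrix polynomial of odd degree d over a field F, and let M(λ;Q) be the block diagonal pencil diag(λQ_d + Q_{d-1}, λQ_{d-2} + Q_{d-3}, ..., λQ_1 + Q_0) of size n(d+1)/2. Then M(λ;Q), viewed as a ((d+1)/2)×((d+1)/2) block matrix with n×n blocks, satisfies the antidiagonal sum condition for Q(λ): for every s ∈ {0,...,d}, Σ_{i+j=d+2-s}[M_1]_{ij} + Σ_{i+j=d+1-s}[M_0]_{ij} = Q_s, where M(λ;Q) = λM_1 + M_0. Here d plays the role of k = p+q+1 with p = q = (d-1)/2. -/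
theorem Finset.sum_sum_ite_ite_eq {ι M : Type*} [Fintype ι] [DecidableEq ι] [AddCommMonoid M]
    (p : ι → ι → Prop) [DecidableRel p] (f : ι → M) :
    ∑ i, ∑ j, (if p i j then (if i = j then f i else 0) else 0) =
      ∑ i, if p i i then f i else 0 := by
  refine Finset.sum_congr rfl fun i _ => ?_
  rw [Finset.sum_eq_single i (fun j _ hj => by simp [Ne.symm hj]) (by simp)]
  simp

theorem Fin.sum_ite_eq_of_iff {M : Type*} [AddCommMonoid M] {N m : ℕ} (hm : m < N)
    (P : ℕ → Prop) [DecidablePred P] (hP : ∀ i, P i ↔ i = m) (g : ℕ → M) :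
    ∑ i : Fin N, (if P i then g i else 0) = g m := by
  rw [Finset.sum_eq_single ⟨m, hm⟩ (fun j _ hj => if_neg fun h => hj (Fin.ext ((hP j).1 h)))
    (by simp)]
  exact if_pos ((hP m).2 rfl)

/-- for an `n×n` matrix polynomial `Q(λ) = Σ_{i=0}^d Q_i λ^i` of
odd degree `d`, the block diagonal pencil `M(λ;Q) = diag(λQ_d + Q_{d-1}, ...,
λQ_1 + Q_0)`, viewed as a `((d+1)/2) × ((d+1)/2)` block matrix with `n×n`
blocks `M₁`, `M₀` (so that `M(λ;Q) = λM₁ + M₀`, the `i`-th 0-based diagonal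
block of `M₁` being `Q_{d-2i}` and that of `M₀` being `Q_{d-1-2i}`), satisfies
the antidiagonal sum condition for `Q(λ)` with `k = d`, `p = q = (d-1)/2`. -/
theorem stmt5 (F : Type*) [Field F] (n d : ℕ) (hd : Odd d)
    (Q : ℕ → Matrix (Fin n) (Fin n) F) :
    ∀ s : ℕ, s ≤ d →
      (∑ i : Fin ((d + 1) / 2), ∑ j : Fin ((d + 1) / 2),
        (if (i : ℕ) + (j : ℕ) + s = d then
          (if i = j then Q (d - 2 * (i : ℕ)) else 0) else 0)) +
      (∑ i : Fin ((d + 1) / 2), ∑ j : Fin ((d + 1) / 2),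
        (if (i : ℕ) + (j : ℕ) + s + 1 = d then
          (if i = j then Q (d - 1 - 2 * (i : ℕ)) else 0) else 0)) = Q s := by
  intro s hs
  have hN : (d - s) / 2 < (d + 1) / 2 := by obtain ⟨t, rfl⟩ := hd; omega
  rw [Finset.sum_sum_ite_ite_eq (fun i j : Fin ((d + 1) / 2) => (i : ℕ) + j + s = d),
    Finset.sum_sum_ite_ite_eq (fun i j : Fin ((d + 1) / 2) => (i : ℕ) + j + s + 1 = d)]
  -- exactly one of the two antidiagonals meets the diagonal, at block `m`, by the parity of `d - s`
  obtain ⟨m, hm | hm⟩ := Nat.even_or_odd' (d - s)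
  · rw [Fin.sum_ite_eq_of_iff (m := m) (by omega) (fun i => i + i + s = d) (by omega)
        (fun i => Q (d - 2 * i)),
      Finset.sum_eq_zero fun i _ => if_neg (by omega), add_zero, show d - 2 * m = s by omega]
  · rw [Fin.sum_ite_eq_of_iff (m := m) (by omega) (fun i => i + i + s + 1 = d) (by omega)
        (fun i => Q (d - 1 - 2 * i)),
      Finset.sum_eq_zero fun i _ => if_neg (by omega), zero_add, show d - 1 - 2 * m = s by omega]
end

section
/- Let h be a nonnegative integer, let w_h be the admissible tuple associated with h, i.e., w_h = (h-1:h, h-3:h-2, ..., p+1:p+2, 0:p) where p = 0 if h is even and p = 1 if h is odd, and let c_h be its symmetric complement: c_h = (h-1, h-3, ..., 2, 0) if h is odd, c_h = (h-1, h-3, ..., 1) if h > 0 is even, and c_h = ∅ if h = 0. Then the concatenated index tuple (w_h, c_h) satisfies the Successor Infix Property: for every pair of equal indices i_a = i_b with a < b in the tuple, there exists c with a < c < b such that i_c = i_a + 1. -/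
/-
Both `w_h` and `c_h` are duplicate-free (`w_h` is a permutation of `0:h`, and `c_h` is strictly
decreasing), so a repeated value `v` occurs once in `w_h` and once in `c_h`, in that order.
Every such `v` is of the form `h - 1 - 2k` and `w_h` contains the block `(v, v + 1)`, so the
entry right after the occurrence of `v` in `w_h` is the required `v + 1`.
-/

/-- The Successor Infix Property: for every pair of equal entries at positions
`a < b` of the tuple, some entry equal to their value plus one occurs strictly
between them. -/
def SIP (l : List ℕ) : Prop :=
  ∀ (a b : ℕ) (ha : a < l.length) (hb : b < l.length), a < b →
    l.get ⟨a, ha⟩ = l.get ⟨b, hb⟩ →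
    ∃ (c : ℕ) (hc : c < l.length), a < c ∧ c < b ∧
      l.get ⟨c, hc⟩ = l.get ⟨a, ha⟩ + 1

/-- The admissible tuple `w_h = (h-1:h, h-3:h-2, ..., p+1:p+2, 0:p)` with
`p = 0` for even `h` and `p = 1` for odd `h`. -/
def wTuple : ℕ → List ℕ
  | 0 => [0]
  | 1 => [0, 1]
  | (h + 2) => [h + 1, h + 2] ++ wTuple h

/-- The symmetric complement `c_h` of `w_h`: `(h-1, h-3, ..., 2, 0)` for odd
`h`, `(h-1, h-3, ..., 1)` for even `h > 0`, and `∅` for `h = 0`. -/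
def cTuple : ℕ → List ℕ
  | 0 => []
  | 1 => [0]
  | (h + 2) => (h + 1) :: cTuple h

theorem List.Nodup.getElem_add_one_of_pair_infix {α : Type*} {l : List α} (hl : l.Nodup)
    {x y : α} (hxy : [x, y] <:+: l) {a : ℕ} (ha : a < l.length) (hx : l[a] = x) :
    ∃ h : a + 1 < l.length, l[a + 1] = y := by
  obtain ⟨s, t, rfl⟩ := hxy
  have hs : (s ++ [x, y] ++ t)[s.length]'(by simp) = x := by simp
  obtain rfl : a = s.length := hl.getElem_inj_iff.mp (hx.trans hs.symm)
  exact ⟨by simp, by simp⟩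

theorem sip_append_of_nodup {u w : List ℕ} (hu : u.Nodup) (hw : w.Nodup)
    (hinfix : ∀ v ∈ w, [v, v + 1] <:+: u) : SIP (u ++ w) := by
  intro a b _ hb hab heq
  simp only [List.get_eq_getElem] at heq ⊢
  have hbu : u.length ≤ b := by
    by_contra! hbu
    rw [List.getElem_append_left (hab.trans hbu), List.getElem_append_left hbu] at heq
    exact hab.ne (hu.getElem_inj_iff.mp heq)
  have hau : a < u.length := by
    by_contra! hau
    rw [List.getElem_append_right hau, List.getElem_append_right hbu] at heq
    have := hw.getElem_inj_iff.mp heq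
    omega
  rw [List.getElem_append_left hau, List.getElem_append_right hbu] at heq
  rw [List.getElem_append_left hau]
  obtain ⟨hlt, hsucc⟩ :=
    hu.getElem_add_one_of_pair_infix (hinfix _ (heq ▸ List.getElem_mem _)) hau rfl
  exact ⟨a + 1, by omega, by omega, by omega, by rw [List.getElem_append_left hlt, hsucc]⟩

theorem le_of_mem_wTuple : ∀ {h x : ℕ}, x ∈ wTuple h → x ≤ h
  | 0, _, hx => by simp_all [wTuple]
  | 1, _, hx => by simp [wTuple] at hx; omega
  | h + 2, x, hx => by
    simp only [wTuple, List.cons_append, List.nil_append, List.mem_cons] at hx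
    rcases hx with rfl | rfl | hx
    · omega
    · omega
    · have := le_of_mem_wTuple hx; omega

theorem lt_of_mem_cTuple : ∀ {h x : ℕ}, x ∈ cTuple h → x < h
  | 0, _, hx => by simp [cTuple] at hx
  | 1, _, hx => by simp_all [cTuple]
  | h + 2, x, hx => by
    simp only [cTuple, List.mem_cons] at hx
    rcases hx with rfl | hx
    · omega
    · have := lt_of_mem_cTuple hx; omega

theorem nodup_wTuple : ∀ h, (wTuple h).Nodup
  | 0 => by simp [wTuple]
  | 1 => by simp [wTuple]
  | h + 2 => by
    simp only [wTuple, List.cons_append, List.nil_append, List.nodup_cons, List.mem_cons]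
    refine ⟨?_, fun hmem => ?_, nodup_wTuple h⟩
    · rintro (hh | hmem)
      · omega
      · have := le_of_mem_wTuple hmem; omega
    · have := le_of_mem_wTuple hmem; omega

theorem nodup_cTuple : ∀ h, (cTuple h).Nodup
  | 0 => by simp [cTuple]
  | 1 => by simp [cTuple]
  | h + 2 => List.nodup_cons.mpr ⟨fun hmem => by have := lt_of_mem_cTuple hmem; omega,
      nodup_cTuple h⟩

theorem pair_infix_wTuple_of_mem_cTuple : ∀ {h v : ℕ}, v ∈ cTuple h → [v, v + 1] <:+: wTuple h
  | 0, _, hv => by simp [cTuple] at hv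
  | 1, _, hv => by simp_all [cTuple, wTuple]
  | h + 2, v, hv => by
    simp only [cTuple, List.mem_cons] at hv
    rcases hv with rfl | hv
    · exact (List.prefix_append _ _).isInfix
    · exact (pair_infix_wTuple_of_mem_cTuple hv).trans (List.suffix_append _ _).isInfix

/-- the concatenated index tuple `(w_h, c_h)` satisfies the
Successor Infix Property. -/
theorem stmt12 (h : ℕ) : SIP (wTuple h ++ cTuple h) :=
  sip_append_of_nodup (nodup_wTuple h) (nodup_cTuple h) fun _ =>
    pair_infix_wTuple_of_mem_cTuple
end

section
/- Let t = (a_s:b_s, a_{s-1}:b_{s-1}, ..., a_1:b_1) be an index tuple in column standard form with indices from {0,...,h}, i.e., h ≥ b_s > b_{s-1} > ... > b_1 ≥ 0 and 0 ≤ a_j ≤ b_j for all j. Then t satisfies the Successor Infix Property. -/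
/-- The list of the tuple `(a_{s-1}:b_{s-1}, ..., a_1:b_1, a_0:b_0)` (0-based
indexing of the strings, listed with head indices decreasing left to right),
where `(a:b)` denotes the string `(a, a+1, ..., b)`. -/
def csfList (s : ℕ) (a b : ℕ → ℕ) : List ℕ :=
  ((List.range s).reverse).flatMap fun j => List.range' (a j) (b j + 1 - a j)

/-! A string `(u:u+n-1)` placed in front of a tuple whose entries all lie below its last entry
`u+n-1` keeps the SIP: a repeated value `u+i` is followed by `u+i+1` inside the string itself.
Prepending the strings one by one in order of increasing heads builds the column standard form. -/

namespace SIP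

theorem of_nodup {l : List ℕ} (hl : l.Nodup) : SIP l := by
  intro p q hp hq hpq heq
  exact absurd ((hl.get_inj_iff).mp heq) (by simp [Fin.ext_iff, hpq.ne])

theorem append {l₁ l₂ : List ℕ} (h₁ : SIP l₁) (h₂ : SIP l₂)
    (hcross : ∀ (i : ℕ) (hi : i < l₁.length), l₁[i] ∈ l₂ →
      ∃ (j : ℕ) (hj : j < l₁.length), i < j ∧ l₁[j] = l₁[i] + 1) :
    SIP (l₁ ++ l₂) := by
  intro p q hp hq hpq heq
  simp only [List.get_eq_getElem] at heq ⊢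
  have hq' : q < l₁.length + l₂.length := by simpa using hq
  by_cases hq₁ : q < l₁.length
  · obtain ⟨c, hc, hpc, hcq, hval⟩ := h₁ p q (by omega) hq₁ hpq (by
      simpa [List.getElem_append_left, hq₁, hpq.trans hq₁] using heq)
    refine ⟨c, by omega, hpc, hcq, ?_⟩
    simpa [List.getElem_append_left, hc, hpq.trans hq₁] using hval
  by_cases hp₁ : p < l₁.length
  · have hmem : l₁[p] ∈ l₂ := by
      rw [List.getElem_append_left hp₁, List.getElem_append_right (by omega)] at heq
      exact heq ▸ List.getElem_mem _
    obtain ⟨c, hc, hpc, hval⟩ := hcross p hp₁ hmem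
    refine ⟨c, by omega, hpc, by omega, ?_⟩
    simpa [List.getElem_append_left, hc, hp₁] using hval
  · rw [List.getElem_append_right (by omega), List.getElem_append_right (by omega)] at heq
    obtain ⟨c, hc, hpc, hcq, hval⟩ :=
      h₂ (p - l₁.length) (q - l₁.length) (by omega) (by omega) (by omega) heq
    refine ⟨c + l₁.length, by omega, by omega, by omega, ?_⟩
    rw [List.getElem_append_right (by omega), List.getElem_append_right (by omega)]
    simpa using hval

theorem range'_append {u n : ℕ} {l : List ℕ} (hl : SIP l) (hlt : ∀ x ∈ l, x + 1 < u + n) :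
    SIP (List.range' u n ++ l) := by
  refine append (of_nodup List.nodup_range') hl fun i hi hmem => ?_
  rw [List.length_range'] at hi
  have hsucc : u + i + 1 < u + n := by simpa using hlt _ hmem
  exact ⟨i + 1, by simp; omega, by omega, by simp; ring⟩

end SIP

theorem csfList_succ (s : ℕ) (a b : ℕ → ℕ) :
    csfList (s + 1) a b = List.range' (a s) (b s + 1 - a s) ++ csfList s a b := by
  simp [csfList, List.range_succ]

theorem exists_le_of_mem_csfList {s : ℕ} {a b : ℕ → ℕ} {x : ℕ} (hx : x ∈ csfList s a b) :
    ∃ j < s, x ≤ b j := by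
  simp only [csfList, List.mem_flatMap, List.mem_reverse, List.mem_range,
    List.mem_range'] at hx
  obtain ⟨j, hj, _, hxb⟩ := hx
  exact ⟨j, hj, by omega⟩

theorem stmt15_general (s : ℕ) (a b : ℕ → ℕ)
    (hmono : ∀ i j : ℕ, i < j → j < s → b i < b j)
    (hab : ∀ j < s, a j ≤ b j) :
    SIP (csfList s a b) := by
  induction s with
  | zero => exact SIP.of_nodup List.nodup_nil
  | succ s ih =>
    rw [csfList_succ]
    refine SIP.range'_append (ih (fun i j hij hjs => hmono i j hij (by omega))
      (fun j hj => hab j (by omega))) fun x hx => ?_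
    obtain ⟨j, hj, hxb⟩ := exists_le_of_mem_csfList hx
    have := hmono j s hj (by omega)
    have := hab s (by omega)
    omega

/-- an index tuple in column standard form with indices from
`{0,...,h}` — i.e. `h ≥ b_{s-1} > ... > b_1 > b_0 ≥ 0` and `a_j ≤ b_j` —
satisfies the Successor Infix Property. -/
theorem stmt15 (h s : ℕ) (a b : ℕ → ℕ)
    (hmono : ∀ i j : ℕ, i < j → j < s → b i < b j)
    (hab : ∀ j < s, a j ≤ b j)
    (hh : ∀ j < s, b j ≤ h) :
    SIP (csfList s a b) :=
  stmt15_general s a b hmono hab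
end

section
/- Let h be a positive integer, let t be an index tuple with indices from {0,...,h-1}, and let (a:b) be a string with indices from {0,...,h-2}. Then the concatenated tuple (t, a:b) satisfies the SIP if and only if t satisfies the SIP and no index c ∈ {a, a+1, ..., b} belongs to heads(t), where heads(t) is the set of string heads {b_i} of the column standard form of t. -/
/-- Equivalence of index tuples: generated by interchanging two adjacent
distinct commuting indices (indices `x ≠ y` with `|x - y| ≠ 1`). -/
inductive TupleEquiv : List ℕ → List ℕ → Prop
  | refl (l : List ℕ) : TupleEquiv l l
  | swap (u v : List ℕ) (x y : ℕ) (hxy : x ≠ y) (h1 : x ≠ y + 1) (h2 : y ≠ x + 1) :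
      TupleEquiv (u ++ x :: y :: v) (u ++ y :: x :: v)
  | trans {l1 l2 l3 : List ℕ} :
      TupleEquiv l1 l2 → TupleEquiv l2 l3 → TupleEquiv l1 l3

/-- `x` is a head of the column standard form of `t`: some tuple in column
standard form equivalent to `t` has `x` among its string heads. -/
def IsHead (t : List ℕ) (x : ℕ) : Prop :=
  ∃ (s : ℕ) (a b : ℕ → ℕ),
    (∀ i j : ℕ, i < j → j < s → b i < b j) ∧ (∀ j < s, a j ≤ b j) ∧
    TupleEquiv t (csfList s a b) ∧ ∃ j < s, b j = x

/-!
Call `x` *dangling* in a tuple if some occurrence of `x` is not followed by any `x + 1`.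
By the SIP, appending `x` to a SIP tuple keeps the SIP exactly when `x` is not dangling, so
appending the string `(a:b)` letter by letter keeps it exactly when none of `a, …, b` is dangling
in `t`. The SIP depends, for each `x`, only on the subsequence of letters `x, x + 1`, which
commuting swaps do not change; so the SIP, and for SIP tuples the dangling indices, are invariant
under equivalence. In column standard form the dangling indices are precisely the string heads, and
every SIP tuple can be put into column standard form by inserting its letters one at a time.
-/

theorem List.eq_take_append_getElem_cons {α : Type*} (l : List α) {i j : ℕ} (hij : i < j)
    (hj : j < l.length) :
    l = l.take i ++ l[i] :: ((l.drop (i + 1)).take (j - i - 1) ++ l[j] :: l.drop (j + 1)) := by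
  have hdrop : l.drop j = (l.drop (i + 1)).drop (j - i - 1) := by
    rw [List.drop_drop]; congr 1; omega
  rw [← List.drop_eq_getElem_cons hj, hdrop, List.take_append_drop,
    ← List.drop_eq_getElem_cons (by omega), List.take_append_drop]

theorem sip_iff_forall_eq_append {l : List ℕ} :
    SIP l ↔ ∀ (x : ℕ) (u v w : List ℕ), l = u ++ x :: (v ++ x :: w) → x + 1 ∈ v := by
  constructor
  · rintro hl x u v w rfl
    have hi : u.length < (u ++ x :: (v ++ x :: w)).length := by simp
    have hj : u.length + (v.length + 1) < (u ++ x :: (v ++ x :: w)).length := by simp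
    obtain ⟨c, hc, hic, hcj, hxc⟩ := hl _ _ hi hj (by omega) (by simp [List.getElem_append_right])
    have e : u ++ x :: (v ++ x :: w) = (u ++ [x]) ++ (v ++ x :: w) := by simp
    simp only [List.get_eq_getElem, List.getElem_of_eq e,
      List.getElem_append_right (by simp; omega : (u ++ [x]).length ≤ c)] at hxc
    rw [List.getElem_append_left (by simp; omega)] at hxc
    simp only [List.append_assoc, List.cons_append, List.nil_append,
      List.getElem_append_right le_rfl, Nat.sub_self, List.getElem_cons_zero] at hxc
    exact hxc ▸ List.getElem_mem _
  · intro hl i j hi hj hij hget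
    have hsplit := l.eq_take_append_getElem_cons hij hj
    simp only [List.get_eq_getElem] at hget ⊢
    rw [← hget] at hsplit
    obtain ⟨k, hk, hxk⟩ := List.getElem_of_mem (hl _ _ _ _ hsplit)
    simp only [List.length_take, List.length_drop, List.getElem_take, List.getElem_drop] at hk hxk
    exact ⟨i + 1 + k, by omega, by omega, by omega, hxk⟩

def Dangling (l : List ℕ) (x : ℕ) : Prop :=
  ∃ u v, l = u ++ x :: v ∧ x + 1 ∉ v

theorem sip_append_singleton {l : List ℕ} {x : ℕ} :
    SIP (l ++ [x]) ↔ SIP l ∧ ¬ Dangling l x := by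
  simp only [sip_iff_forall_eq_append, Dangling, not_exists, not_and, not_not]
  constructor
  · intro hl
    refine ⟨fun y u v w h => hl y u v (w ++ [x]) (by simp [h]), fun u v h => ?_⟩
    exact hl x u v [] (by simp [h])
  · rintro ⟨hl, hx⟩ y u v w h
    obtain rfl | ⟨w', z, rfl⟩ := w.eq_nil_or_concat
    · obtain ⟨rfl, hxy⟩ :=
        List.append_inj' (h.trans (by simp) : l ++ [x] = (u ++ y :: v) ++ [y]) rfl
      obtain rfl := List.singleton_inj.mp hxy
      exact hx u v rfl
    · obtain ⟨rfl, -⟩ := List.append_inj'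
        (h.trans (by simp) : l ++ [x] = (u ++ y :: (v ++ y :: w')) ++ [z]) rfl
      exact hl y u v w' rfl

theorem dangling_append {l₁ l₂ : List ℕ} {x : ℕ} :
    Dangling (l₁ ++ l₂) x ↔ (Dangling l₁ x ∧ x + 1 ∉ l₂) ∨ Dangling l₂ x := by
  constructor
  · rintro ⟨u, v, h, hv⟩
    rcases List.append_eq_append_iff.mp h with ⟨m, rfl, hm⟩ | ⟨m, rfl, hm⟩
    · exact Or.inr ⟨m, v, hm, hv⟩
    · rcases List.cons_eq_append_iff.mp hm with ⟨rfl, rfl⟩ | ⟨m', rfl, rfl⟩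
      · exact Or.inr ⟨[], v, by simp, hv⟩
      · exact Or.inl ⟨⟨u, m', rfl, fun h => hv (by simp [h])⟩, fun h => hv (by simp [h])⟩
  · rintro (⟨⟨u, v, rfl, hv⟩, h₂⟩ | ⟨u, v, rfl, hv⟩)
    · exact ⟨u, v ++ l₂, by simp, by simp [hv, h₂]⟩
    · exact ⟨l₁ ++ u, v, by simp, hv⟩

theorem dangling_range'_iff {p n x : ℕ} :
    Dangling (List.range' p n) x ↔ p ≤ x ∧ x + 1 = p + n := by
  constructor
  · rintro ⟨u, v, h, hv⟩
    obtain ⟨k, hk, -, hkv⟩ := List.range'_eq_append_iff.mp h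
    obtain ⟨rfl, hpos, rfl⟩ := List.range'_eq_cons_iff.mp hkv.symm
    simp only [List.mem_range'_1] at hv
    omega
  · rintro ⟨hpx, hx⟩
    refine ⟨List.range' p (x - p), [], ?_, by simp⟩
    rw [show n = x - p + 1 by omega, List.range'_concat]
    congr 2; omega

theorem sip_append_range'_iff {l : List ℕ} {a n : ℕ} :
    SIP (l ++ List.range' a n) ↔ SIP l ∧ ∀ c, a ≤ c → c < a + n → ¬ Dangling l c := by
  induction n with
  | zero => simpa using fun _ c (h₁ : a ≤ c) (h₂ : c < a) => absurd h₂ (not_lt.mpr h₁)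
  | succ n ih =>
    have hnew : Dangling (l ++ List.range' a n) (a + n) ↔ Dangling l (a + n) := by
      simp [dangling_append, dangling_range'_iff, List.mem_range'_1]
    rw [List.range'_concat, ← List.append_assoc, sip_append_singleton, ih, one_mul, hnew]
    constructor
    · rintro ⟨⟨hl, hc⟩, hn⟩
      refine ⟨hl, fun c hac hc' => ?_⟩
      rcases Nat.lt_succ_iff_lt_or_eq.mp hc' with h | rfl
      · exact hc c hac h
      · exact hn
    · rintro ⟨hl, hc⟩
      exact ⟨⟨hl, fun c hac h => hc c hac (by omega)⟩, hc _ (by omega) (by omega)⟩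

theorem sip_iff_forall_not_infix_filter {l : List ℕ} :
    SIP l ↔ ∀ x, ¬ [x, x] <:+: l.filter (fun z => z = x ∨ z = x + 1) := by
  rw [sip_iff_forall_eq_append]
  refine forall_congr' fun x => ?_
  constructor
  · rintro hl ⟨s, r, hsr⟩
    rw [List.append_assoc, List.cons_append, List.cons_append, List.nil_append] at hsr
    obtain ⟨l₁, l₂, rfl, -, h₂⟩ := List.filter_eq_append_iff.mp hsr.symm
    obtain ⟨m₁, m₂, rfl, -, -, h₃⟩ := List.filter_eq_cons_iff.mp h₂
    obtain ⟨n₁, n₂, rfl, hn₁, -, -⟩ := List.filter_eq_cons_iff.mp h₃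
    simpa using hn₁ _ (hl (l₁ ++ m₁) n₁ n₂ (by simp))
  · rintro hl u v w rfl
    by_contra hv
    apply hl
    simp only [List.filter_append, List.filter_cons, true_or, decide_true, if_true]
    rcases hfv : v.filter (fun z => z = x ∨ z = x + 1) with _ | ⟨z, r⟩
    · exact ⟨_, _, List.append_assoc _ _ _⟩
    · obtain ⟨hzv, rfl | rfl⟩ : z ∈ v ∧ (z = x ∨ z = x + 1) := by
        simpa using (hfv ▸ List.mem_cons_self : z ∈ v.filter (fun z => z = x ∨ z = x + 1))
      · exact ⟨_, _, List.append_assoc _ _ _⟩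
      · exact absurd hzv hv

namespace TupleEquiv

theorem append_left {l₁ l₂ : List ℕ} (r : List ℕ) (h : TupleEquiv l₁ l₂) :
    TupleEquiv (r ++ l₁) (r ++ l₂) := by
  induction h with
  | refl l => exact .refl _
  | swap u v x y hxy h₁ h₂ => simpa using TupleEquiv.swap (r ++ u) v x y hxy h₁ h₂
  | trans _ _ ih₁ ih₂ => exact ih₁.trans ih₂

theorem append_right {l₁ l₂ : List ℕ} (r : List ℕ) (h : TupleEquiv l₁ l₂) :
    TupleEquiv (l₁ ++ r) (l₂ ++ r) := by
  induction h with
  | refl l => exact .refl _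
  | swap u v x y hxy h₁ h₂ => simpa using TupleEquiv.swap u (v ++ r) x y hxy h₁ h₂
  | trans _ _ ih₁ ih₂ => exact ih₁.trans ih₂

theorem append_singleton_cons {m : List ℕ} {x : ℕ}
    (hm : ∀ z ∈ m, z ≠ x ∧ z ≠ x + 1 ∧ x ≠ z + 1) : TupleEquiv (m ++ [x]) (x :: m) := by
  induction m with
  | nil => exact .refl _
  | cons z m ih =>
    obtain ⟨hzx, hz, hx⟩ := hm z List.mem_cons_self
    exact (append_left [z] (ih fun y hy => hm y (List.mem_cons_of_mem z hy))).trans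
      (TupleEquiv.swap [] m z x hzx hz hx)

theorem filter_eq {l₁ l₂ : List ℕ} (h : TupleEquiv l₁ l₂) (x : ℕ) :
    l₁.filter (fun z => z = x ∨ z = x + 1) = l₂.filter (fun z => z = x ∨ z = x + 1) := by
  induction h with
  | refl l => rfl
  | swap u v y z hyz h₁ h₂ =>
    have : ¬ ((y = x ∨ y = x + 1) ∧ (z = x ∨ z = x + 1)) := by omega
    by_cases hy : y = x ∨ y = x + 1 <;> by_cases hz : z = x ∨ z = x + 1 <;>
      simp_all [List.filter_append]
  | trans _ _ ih₁ ih₂ => exact ih₁.trans ih₂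

theorem sip_iff {l₁ l₂ : List ℕ} (h : TupleEquiv l₁ l₂) : SIP l₁ ↔ SIP l₂ := by
  simp only [sip_iff_forall_not_infix_filter, h.filter_eq]

theorem dangling_iff {l₁ l₂ : List ℕ} (h : TupleEquiv l₁ l₂) (hl : SIP l₁) {x : ℕ} :
    Dangling l₁ x ↔ Dangling l₂ x := by
  have key := (h.append_right [x]).sip_iff
  rw [sip_append_singleton, sip_append_singleton] at key
  simpa only [hl, h.sip_iff.mp hl, true_and, not_iff_not] using key

end TupleEquiv

-- `cs` lists the strings `(p:q)` of a tuple from right to left, so heads increase along `cs`.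
def ofStrings : List (ℕ × ℕ) → List ℕ
  | [] => []
  | (p, q) :: cs => ofStrings cs ++ List.range' p (q + 1 - p)

def IsColumnStandard (cs : List (ℕ × ℕ)) : Prop :=
  (∀ c ∈ cs, c.1 ≤ c.2) ∧ cs.Pairwise (fun c d => c.2 < d.2)

theorem isColumnStandard_cons {p q : ℕ} {cs : List (ℕ × ℕ)} :
    IsColumnStandard ((p, q) :: cs) ↔
      p ≤ q ∧ (∀ y ∈ cs.map Prod.snd, q < y) ∧ IsColumnStandard cs := by
  simp only [IsColumnStandard, List.mem_cons, forall_eq_or_imp, List.pairwise_cons,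
    List.mem_map, Prod.exists, exists_eq_right, forall_exists_index]
  aesop

theorem dangling_ofStrings_iff {cs : List (ℕ × ℕ)} (hcs : IsColumnStandard cs) {x : ℕ} :
    Dangling (ofStrings cs) x ↔ x ∈ cs.map Prod.snd := by
  induction cs with
  | nil => simp [ofStrings, Dangling]
  | cons c cs ih =>
    obtain ⟨p, q⟩ := c
    obtain ⟨hpq, hq, hcs⟩ := isColumnStandard_cons.mp hcs
    rw [ofStrings, dangling_append, ih hcs, dangling_range'_iff, List.mem_range'_1]
    simp only [List.map_cons, List.mem_cons]
    by_cases hx : x ∈ cs.map Prod.snd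
    · have := hq x hx
      simp only [hx, true_and, or_true, iff_true]
      omega
    · simp only [hx, false_and, false_or, or_false]
      omega

theorem exists_ofStrings_append_singleton {cs : List (ℕ × ℕ)} (hcs : IsColumnStandard cs) {x : ℕ}
    (hx : x ∉ cs.map Prod.snd) :
    ∃ ds, IsColumnStandard ds ∧ ds.map Prod.snd ⊆ x :: cs.map Prod.snd ∧
      TupleEquiv (ofStrings cs ++ [x]) (ofStrings ds) := by
  induction cs with
  | nil => exact ⟨[(x, x)], by simp [IsColumnStandard], by simp, by simpa [ofStrings] using .refl _⟩
  | cons c cs ih =>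
    obtain ⟨p, q⟩ := c
    obtain ⟨hpq, hq, hcs'⟩ := isColumnStandard_cons.mp hcs
    simp only [List.map_cons, List.mem_cons, not_or] at hx
    rcases lt_trichotomy x q with hxq | rfl | hqx
    · refine ⟨(x, x) :: (p, q) :: cs, isColumnStandard_cons.mpr ⟨le_rfl, ?_, hcs⟩, by simp,
        by simpa [ofStrings] using .refl _⟩
      simp only [List.map_cons, List.mem_cons, forall_eq_or_imp]
      exact ⟨hxq, fun y hy => hxq.trans (hq y hy)⟩
    · exact absurd rfl hx.1
    obtain rfl | hqx : x = q + 1 ∨ q + 1 < x := by omega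
    · refine ⟨(p, q + 1) :: cs, isColumnStandard_cons.mpr ⟨by omega, fun y hy => ?_, hcs'⟩,
        by simp, ?_⟩
      · exact lt_of_le_of_ne (hq y hy) (fun h => hx.2 (h ▸ hy))
      · have hconcat : ofStrings ((p, q) :: cs) ++ [q + 1] = ofStrings ((p, q + 1) :: cs) := by
          rw [ofStrings, ofStrings, List.append_assoc, show q + 1 + 1 - p = q + 1 - p + 1 by omega,
            List.range'_concat, one_mul, show p + (q + 1 - p) = q + 1 by omega]
        exact hconcat ▸ .refl _
    · obtain ⟨ds, hds, hheads, hequiv⟩ := ih hcs' hx.2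
      refine ⟨(p, q) :: ds, isColumnStandard_cons.mpr ⟨hpq, fun y hy => ?_, hds⟩, ?_, ?_⟩
      · rcases List.mem_cons.mp (hheads hy) with rfl | hy
        · omega
        · exact hq y hy
      · rw [List.map_cons, List.map_cons, List.cons_subset]
        exact ⟨by simp,
          List.Subset.trans hheads (List.cons_subset_cons x (List.subset_cons_self q _))⟩
      · have hcomm :
            TupleEquiv (List.range' p (q + 1 - p) ++ [x]) (x :: List.range' p (q + 1 - p)) :=
          TupleEquiv.append_singleton_cons fun z hz => by
            rw [List.mem_range'_1] at hz
            omega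
        have hmove : TupleEquiv (ofStrings cs ++ x :: List.range' p (q + 1 - p))
            (ofStrings ds ++ List.range' p (q + 1 - p)) := by
          simpa using hequiv.append_right (List.range' p (q + 1 - p))
        simpa [ofStrings] using (hcomm.append_left (ofStrings cs)).trans hmove

theorem exists_isColumnStandard {l : List ℕ} (hl : SIP l) :
    ∃ cs, IsColumnStandard cs ∧ TupleEquiv l (ofStrings cs) := by
  induction l using List.reverseRecOn with
  | nil => exact ⟨[], by simp [IsColumnStandard], .refl _⟩
  | append_singleton l x ih =>
    obtain ⟨hl, hx⟩ := sip_append_singleton.mp hl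
    obtain ⟨cs, hcs, hequiv⟩ := ih hl
    rw [hequiv.dangling_iff hl, dangling_ofStrings_iff hcs] at hx
    obtain ⟨ds, hds, -, hequiv'⟩ := exists_ofStrings_append_singleton hcs hx
    exact ⟨ds, hds, (hequiv.append_right [x]).trans hequiv'⟩

theorem ofStrings_eq_flatMap (cs : List (ℕ × ℕ)) :
    ofStrings cs = cs.reverse.flatMap fun c => List.range' c.1 (c.2 + 1 - c.1) := by
  induction cs with
  | nil => rfl
  | cons c cs ih => simp [ofStrings, ih]

theorem csfList_eq_ofStrings (s : ℕ) (a b : ℕ → ℕ) :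
    csfList s a b = ofStrings ((List.range s).map fun j => (a j, b j)) := by
  simp [csfList, ofStrings_eq_flatMap, ← List.map_reverse, List.flatMap_map]

theorem isHead_iff {t : List ℕ} {x : ℕ} :
    IsHead t x ↔ ∃ cs, IsColumnStandard cs ∧ TupleEquiv t (ofStrings cs) ∧ x ∈ cs.map Prod.snd := by
  constructor
  · rintro ⟨s, a, b, hb, hab, hequiv, j, hj, rfl⟩
    refine ⟨(List.range s).map fun j => (a j, b j), ⟨?_, ?_⟩,
      csfList_eq_ofStrings s a b ▸ hequiv, ?_⟩
    · simpa using hab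
    · rw [List.pairwise_map]
      exact List.pairwise_lt_range.imp_of_mem fun hi hj hij => hb _ _ hij (by simpa using hj)
    · simpa using ⟨j, hj, rfl⟩
  · rintro ⟨cs, ⟨hle, hlt⟩, hequiv, hx⟩
    have hcs : cs = (List.range cs.length).map
        fun j => ((cs.getD j (0, 0)).1, (cs.getD j (0, 0)).2) := by
      refine List.ext_getElem (by simp) fun i hi _ => ?_
      simp [hi]
    refine ⟨cs.length, fun j => (cs.getD j (0, 0)).1, fun j => (cs.getD j (0, 0)).2, ?_, ?_, ?_, ?_⟩
    · intro i j hij hj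
      simpa [hj, hij.trans hj] using List.pairwise_iff_getElem.mp hlt i j (hij.trans hj) hj hij
    · intro j hj
      simpa [hj] using hle _ (List.getElem_mem hj)
    · rwa [csfList_eq_ofStrings, ← hcs]
    · obtain ⟨j, hj, rfl⟩ := List.mem_iff_getElem.mp hx
      rw [List.length_map] at hj
      exact ⟨j, hj, by simp [hj]⟩

theorem isHead_iff_dangling {t : List ℕ} (ht : SIP t) {x : ℕ} : IsHead t x ↔ Dangling t x := by
  rw [isHead_iff]
  constructor
  · rintro ⟨cs, hcs, hequiv, hx⟩
    rwa [hequiv.dangling_iff ht, dangling_ofStrings_iff hcs]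
  · intro hx
    obtain ⟨cs, hcs, hequiv⟩ := exists_isColumnStandard ht
    exact ⟨cs, hcs, hequiv, (dangling_ofStrings_iff hcs).mp ((hequiv.dangling_iff ht).mp hx)⟩

theorem stmt16_general (t : List ℕ) (a b : ℕ) :
    SIP (t ++ List.range' a (b + 1 - a)) ↔
      (SIP t ∧ ∀ c : ℕ, a ≤ c → c ≤ b → ¬ IsHead t c) := by
  rw [sip_append_range'_iff]
  refine and_congr_right fun ht => forall_congr' fun c => ?_
  rw [isHead_iff_dangling ht]
  exact forall_congr' fun hac => ⟨fun h hcb => h (by omega), fun h hcb => h (by omega)⟩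

/-- for a tuple `t` with indices from `{0,...,h-1}` and a string
`(a:b)` with indices from `{0,...,h-2}`, the tuple `(t, a:b)` satisfies the SIP
iff `t` satisfies the SIP and no index `c ∈ {a,...,b}` is a head of the column
standard form of `t`. -/
theorem stmt16 (h : ℕ) (hh : 0 < h) (t : List ℕ) (ht : ∀ x ∈ t, x < h)
    (a b : ℕ) (hab : a ≤ b) (hb : b ≤ h - 2) :
    SIP (t ++ List.range' a (b + 1 - a)) ↔
      (SIP t ∧ ∀ c : ℕ, a ≤ c → c ≤ b → ¬ IsHead t c) :=
  stmt16_general t a b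
end

section
/- Let P(λ) = Σ_{i=0}^k A_i λ^i be an n×n matrix polynomial of odd degree k, s = (k-1)/2, and consider the pencil O_1^P(λ) = [[M(λ;P), K_s(λ)^T],[K_s(λ), 0]] of size kn×kn, where M(λ;P) = diag(λA_k + A_{k-1}, λA_{k-2} + A_{k-3}, ..., λA_1 + A_0) and K_s(λ) = L_s(λ) ⊗ I_n. Then O_1^P(λ) is block-symmetric, and (Λ_s(λ) ⊗ I_n) M(λ;P) (Λ_s(λ)^T ⊗ I_n) = P(λ). -/
/-!
Block symmetry is an entrywise check: `M(λ;P)` is block diagonal and the lower-left block of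
`O₁^P` is written as the block transpose of the upper-right one. For the second claim, sandwiching
the block-diagonal `M(λ;P)` between `Λ_s(λ) ⊗ Iₙ` and its transpose gives
`Σ_j λ^(2(s-j)) (λ A_{k-2j} + A_{k-1-2j})`, which is `P(λ)` with its coefficients grouped in
consecutive pairs.
-/

open Polynomial Matrix

/-- Block transpose of an `a×b` block matrix with `n×n` blocks. -/
def blockT {F : Type*} {a b n : ℕ} (M : Matrix (Fin a × Fin n) (Fin b × Fin n) F) :
    Matrix (Fin b × Fin n) (Fin a × Fin n) F :=
  Matrix.of fun p q => M (q.1, p.2) (p.1, q.2)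

lemma blockT_eq_self_iff {F : Type*} {k n : ℕ} (M : Matrix (Fin k × Fin n) (Fin k × Fin n) F) :
    blockT M = M ↔ ∀ i j a b, M (j, a) (i, b) = M (i, a) (j, b) := by
  refine ⟨fun h i j a b => congrFun₂ h (i, a) (j, b), fun h => ?_⟩
  ext ⟨i, a⟩ ⟨j, b⟩
  exact h i j a b

lemma Finset.sum_range_pairs_mul_pow {R : Type*} [CommSemiring R] (a : ℕ → R) (x : R) (N : ℕ) :
    ∑ m ∈ Finset.range N, (x * a (2 * m + 1) + a (2 * m)) * x ^ (2 * m) =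
      ∑ i ∈ Finset.range (2 * N), a i * x ^ i := by
  induction N with
  | zero => simp
  | succ N ih =>
    rw [Finset.sum_range_succ, ih, Nat.mul_succ, Finset.sum_range_succ _ (2 * N + 1),
      Finset.sum_range_succ]
    ring

lemma Finset.sum_range_pow_mul_linear_mul_pow {R : Type*} [CommSemiring R] (a : ℕ → R) (x : R)
    (s : ℕ) :
    ∑ j ∈ Finset.range (s + 1), x ^ (s - j) * (x * a (2 * s + 1 - 2 * j) + a (2 * s - 2 * j)) *
        x ^ (s - j) =
      ∑ i ∈ Finset.range (2 * s + 2), a i * x ^ i := by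
  rw [← Finset.sum_range_reflect, show 2 * s + 2 = 2 * (s + 1) by ring,
    ← Finset.sum_range_pairs_mul_pow]
  refine Finset.sum_congr rfl fun m hm => ?_
  rw [Finset.mem_range] at hm
  rw [show s + 1 - 1 - m = s - m by omega, show s - (s - m) = m by omega,
    show 2 * s + 1 - 2 * (s - m) = 2 * m + 1 by omega, show 2 * s - 2 * (s - m) = 2 * m by omega]
  ring

/-- `(Λ ⊗ I) · diag(D j) · (Λ'ᵀ ⊗ I)`, with `Λ`, `Λ'` the row vectors `v`, `w`. -/
lemma kron_row_mul_blockDiag_mul_kron_col {ι m R : Type*} [Fintype ι] [DecidableEq ι]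
    [Fintype m] [DecidableEq m] [CommSemiring R] (v w : ι → R) (D : ι → m → m → R) :
    (of fun r (jc : ι × m) => if r = jc.2 then v jc.1 else 0) *
        (of fun p q : ι × m => if p.1 = q.1 then D p.1 p.2 q.2 else 0) *
        (of fun (jc : ι × m) c => if jc.2 = c then w jc.1 else 0) =
      of fun r c => ∑ j, v j * D j r c * w j := by
  ext r c
  simp only [mul_apply, of_apply, Fintype.sum_prod_type, ite_mul, mul_ite, zero_mul, mul_zero,
    Finset.sum_ite_irrel, Finset.sum_const_zero, Finset.sum_ite_eq, Finset.sum_ite_eq',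
    Finset.mem_univ, if_true]

/-- for `P(λ) = Σ_{i=0}^k A_i λ^i` of odd degree `k = 2s+1`, the
pencil `O₁^P(λ) = [[M(λ;P), K_s(λ)^T],[K_s(λ), 0]]` (with
`M(λ;P) = diag(λA_k + A_{k-1}, ..., λA_1 + A_0)` and `K_s(λ) = L_s(λ) ⊗ I_n`)
is block-symmetric, and `(Λ_s(λ) ⊗ I_n) M(λ;P) (Λ_s(λ)^T ⊗ I_n) = P(λ)`. -/
theorem stmt18 (F : Type*) [Field F] (n k s : ℕ) (hk : k = 2 * s + 1)
    (A : ℕ → Matrix (Fin n) (Fin n) F)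
    (O1 : Matrix (Fin k × Fin n) (Fin k × Fin n) (Polynomial F))
    (hO1 : O1 = Matrix.of fun p q =>
      if (p.1 : ℕ) ≤ s ∧ (q.1 : ℕ) ≤ s then
        (if (p.1 : ℕ) = (q.1 : ℕ) then
          X * C (A (k - 2 * (p.1 : ℕ)) p.2 q.2) +
            C (A (k - 1 - 2 * (p.1 : ℕ)) p.2 q.2)
        else 0)
      else if (p.1 : ℕ) ≤ s then
        (if p.2 = q.2 then
          (if (p.1 : ℕ) = (q.1 : ℕ) - (s + 1) then -1
           else if (p.1 : ℕ) = (q.1 : ℕ) - s then X else 0)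
         else 0)
      else if (q.1 : ℕ) ≤ s then
        (if p.2 = q.2 then
          (if (q.1 : ℕ) = (p.1 : ℕ) - (s + 1) then -1
           else if (q.1 : ℕ) = (p.1 : ℕ) - s then X else 0)
         else 0)
      else 0) :
    blockT O1 = O1 ∧
    (Matrix.of fun (r : Fin n) (jc : Fin (s + 1) × Fin n) =>
        if r = jc.2 then (X : Polynomial F) ^ (s - (jc.1 : ℕ)) else 0) *
      (Matrix.of fun (p q : Fin (s + 1) × Fin n) =>
        if (p.1 : ℕ) = (q.1 : ℕ) then
          X * C (A (k - 2 * (p.1 : ℕ)) p.2 q.2) +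
            C (A (k - 1 - 2 * (p.1 : ℕ)) p.2 q.2)
        else 0) *
      (Matrix.of fun (jc : Fin (s + 1) × Fin n) (c : Fin n) =>
        if jc.2 = c then (X : Polynomial F) ^ (s - (jc.1 : ℕ)) else 0) =
      Matrix.of fun (r c : Fin n) =>
        ∑ i ∈ Finset.range (k + 1), C (A i r c) * X ^ i := by
  constructor
  · subst hO1
    rw [blockT_eq_self_iff]
    intro i j a b
    simp only [of_apply]
    split_ifs <;> first | rfl | omega | rw [Fin.ext ‹(i : ℕ) = j›]
  · subst hk
    simp only [Fin.val_inj]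
    rw [kron_row_mul_blockDiag_mul_kron_col (R := F[X]) (fun j : Fin (s + 1) => X ^ (s - (j : ℕ)))
      (fun j => X ^ (s - (j : ℕ))) fun j r c =>
        X * C (A (2 * s + 1 - 2 * (j : ℕ)) r c) + C (A (2 * s + 1 - 1 - 2 * (j : ℕ)) r c)]
    ext r c : 1
    rw [of_apply, of_apply, Nat.add_sub_cancel, Fin.sum_univ_eq_sum_range (fun j => X ^ (s - j) *
        (X * C (A (2 * s + 1 - 2 * j) r c) + C (A (2 * s - 2 * j) r c)) * X ^ (s - j)) (s + 1)]
    exact Finset.sum_range_pow_mul_linear_mul_pow (fun i => C (A i r c)) X s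
end

section
/- Let P(λ) = Σ_{i=0}^k A_i λ^i be an n×n matrix polynomial of odd degree k ≥ 3, let s = (k-1)/2, and let T_P(λ) be the block tridiagonal block-symmetric generalized Fiedler pencil of size kn×kn with diagonal blocks λA_{k-2j} + A_{k-1-2j} in block positions (2j+1, 2j+1) for j = 0,...,s, zero blocks in even diagonal positions, and off-diagonal pattern: block (2j+1, 2j+2) = block (2j+2, 2j+1) = -I_n and block (2j+2, 2j+3) = block (2j+3, 2j+2) = λI_n. Let c be the permutation (1, 3, 5, ..., k, 2, 4, ..., k-1) of {1,...,k} and Π_c^n the associated block-permutation matrix. Then (Π_c^n)^B T_P(λ) Π_c^n = O_1^P(λ), where O_1^P(λ) = [[M(λ;P), K_s(λ)^T],[K_s(λ), 0]] with M(λ;P) = diag(λA_k + A_{k-1}, ..., λA_1 + A_0) and K_s(λ) = L_s(λ) ⊗ I_n. -/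
/-!
Since `Π_c^n` has identity blocks, its block transpose is its ordinary transpose, so
`(Π_c^n)^B T_P Π_c^n` just reorders the block rows and columns of `T_P` by `c`. The first `s + 1`
entries of `c` are the odd block positions of `T_P`, which carry the diagonal blocks
`λA_{k-2j} + A_{k-1-2j}` and are pairwise non-adjacent; the last `s` entries are the even
positions, which meet only the off-diagonal blocks `-I_n` and `λI_n`. Reading off the four
block regions of the reordered pencil gives `M(λ;P)`, `K_s(λ)ᵀ`, `K_s(λ)` and `0`.
-/

open Polynomial Matrix

namespace Matrix

theorem transpose_one_submatrix_mul_mul_one_submatrix {m n R : Type*} [Fintype n]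
    [DecidableEq n] [NonAssocSemiring R] (f : m → n) (M : Matrix n n R) :
    ((1 : Matrix n n R).submatrix id f)ᵀ * M * (1 : Matrix n n R).submatrix id f =
      M.submatrix f f := by
  ext i j
  simp [mul_apply, one_apply]

end Matrix

/-- The block permutation matrix `Π_c^n`, with `I_n` in block position `(c i, i)`. -/
def blockPermMatrix (R : Type*) [Zero R] [One R] {a b : ℕ} (n : ℕ) (c : Fin b → Fin a) :
    Matrix (Fin a × Fin n) (Fin b × Fin n) R :=
  (1 : Matrix (Fin a × Fin n) (Fin a × Fin n) R).submatrix id (Prod.map c id)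

section blockPermMatrix

variable {R : Type*} {a b : ℕ} (n : ℕ) (c : Fin b → Fin a)

theorem blockPermMatrix_apply [Zero R] [One R] (p : Fin a × Fin n) (q : Fin b × Fin n) :
    blockPermMatrix R n c p q = if (p.1 : ℕ) = c q.1 ∧ p.2 = q.2 then 1 else 0 := by
  simp only [blockPermMatrix, submatrix_apply, one_apply, id, Prod.map, Prod.ext_iff,
    Fin.ext_iff]

theorem blockT_blockPermMatrix [Zero R] [One R] :
    blockT (blockPermMatrix R n c) = (blockPermMatrix R n c)ᵀ := by
  ext p q
  simp only [blockT, of_apply, transpose_apply, blockPermMatrix_apply]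
  congr 1
  simp only [eq_iff_iff]
  tauto

theorem blockT_blockPermMatrix_mul_mul [NonAssocSemiring R]
    (M : Matrix (Fin a × Fin n) (Fin a × Fin n) R) :
    blockT (blockPermMatrix R n c) * M * blockPermMatrix R n c =
      M.submatrix (Prod.map c id) (Prod.map c id) := by
  rw [blockT_blockPermMatrix, blockPermMatrix, transpose_one_submatrix_mul_mul_one_submatrix]

end blockPermMatrix

/-- The permutation `c = (1, 3, …, k, 2, 4, …, k-1)` for `k = 2 * s + 1`, with positions and
values shifted to start at `0`. -/
def evensThenOdds (s : ℕ) (i : Fin (2 * s + 1)) : Fin (2 * s + 1) :=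
  ⟨if (i : ℕ) ≤ s then 2 * (i : ℕ) else 2 * ((i : ℕ) - s) - 1, by split <;> omega⟩

theorem evensThenOdds_val (s : ℕ) (i : Fin (2 * s + 1)) :
    (evensThenOdds s i : ℕ) = if (i : ℕ) ≤ s then 2 * (i : ℕ) else 2 * ((i : ℕ) - s) - 1 :=
  rfl

theorem stmt19_general (F : Type*) [Field F] (n k s : ℕ) (hk : k = 2 * s + 1)
    (A : ℕ → Matrix (Fin n) (Fin n) F)
    (T : Matrix (Fin k × Fin n) (Fin k × Fin n) (Polynomial F))
    (hT : T = Matrix.of fun p q =>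
      if (p.1 : ℕ) = (q.1 : ℕ) ∧ (p.1 : ℕ) % 2 = 0 then
        X * C (A (k - (p.1 : ℕ)) p.2 q.2) + C (A (k - 1 - (p.1 : ℕ)) p.2 q.2)
      else if ((q.1 : ℕ) = (p.1 : ℕ) + 1 ∧ (p.1 : ℕ) % 2 = 0) ∨
              ((p.1 : ℕ) = (q.1 : ℕ) + 1 ∧ (q.1 : ℕ) % 2 = 0) then
        (if p.2 = q.2 then -1 else 0)
      else if ((q.1 : ℕ) = (p.1 : ℕ) + 1 ∧ (p.1 : ℕ) % 2 = 1) ∨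
              ((p.1 : ℕ) = (q.1 : ℕ) + 1 ∧ (q.1 : ℕ) % 2 = 1) then
        (if p.2 = q.2 then X else 0)
      else 0)
    (Pc : Matrix (Fin k × Fin n) (Fin k × Fin n) (Polynomial F))
    (hPc : Pc = Matrix.of fun p q =>
      if (p.1 : ℕ) = (if (q.1 : ℕ) ≤ s then 2 * (q.1 : ℕ)
                      else 2 * ((q.1 : ℕ) - s) - 1) ∧ p.2 = q.2 then 1 else 0)
    (O1 : Matrix (Fin k × Fin n) (Fin k × Fin n) (Polynomial F))
    (hO1 : O1 = Matrix.of fun p q =>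
      if (p.1 : ℕ) ≤ s ∧ (q.1 : ℕ) ≤ s then
        (if (p.1 : ℕ) = (q.1 : ℕ) then
          X * C (A (k - 2 * (p.1 : ℕ)) p.2 q.2) +
            C (A (k - 1 - 2 * (p.1 : ℕ)) p.2 q.2)
        else 0)
      else if (p.1 : ℕ) ≤ s then
        (if p.2 = q.2 then
          (if (p.1 : ℕ) = (q.1 : ℕ) - (s + 1) then -1
           else if (p.1 : ℕ) = (q.1 : ℕ) - s then X else 0)
         else 0)
      else if (q.1 : ℕ) ≤ s then
        (if p.2 = q.2 then
          (if (q.1 : ℕ) = (p.1 : ℕ) - (s + 1) then -1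
           else if (q.1 : ℕ) = (p.1 : ℕ) - s then X else 0)
         else 0)
      else 0) :
    blockT Pc * T * Pc = O1 := by
  subst hk
  have hPc_eq : Pc = blockPermMatrix F[X] n (evensThenOdds s) := by
    ext p q
    rw [hPc, blockPermMatrix_apply, evensThenOdds_val, of_apply]
  rw [hPc_eq, blockT_blockPermMatrix_mul_mul, hT, hO1]
  ext ⟨i, r⟩ ⟨j, r'⟩
  simp only [submatrix_apply, of_apply, Prod.map, id, evensThenOdds_val]
  split_ifs <;> first | rfl | omega

/-- for `P(λ) = Σ_{i=0}^k A_i λ^i` of odd degree `k = 2s+1 ≥ 3`,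
the block tridiagonal block-symmetric generalized Fiedler pencil `T_P(λ)`
(diagonal blocks `λA_{k-2j} + A_{k-1-2j}` in odd 1-based block positions, zero
blocks in even positions, off-diagonal blocks `-I_n` in positions
`(2j+1, 2j+2)` and `λI_n` in positions `(2j+2, 2j+3)`, symmetrically) satisfies
`(Π_c^n)^B T_P(λ) Π_c^n = O₁^P(λ)` where `c = (1, 3, ..., k, 2, 4, ..., k-1)`
and `O₁^P(λ) = [[M(λ;P), K_s(λ)^T],[K_s(λ), 0]]`. -/
theorem stmt19 (F : Type*) [Field F] (n k s : ℕ) (hs : 1 ≤ s) (hk : k = 2 * s + 1)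
    (A : ℕ → Matrix (Fin n) (Fin n) F)
    (T : Matrix (Fin k × Fin n) (Fin k × Fin n) (Polynomial F))
    (hT : T = Matrix.of fun p q =>
      if (p.1 : ℕ) = (q.1 : ℕ) ∧ (p.1 : ℕ) % 2 = 0 then
        X * C (A (k - (p.1 : ℕ)) p.2 q.2) + C (A (k - 1 - (p.1 : ℕ)) p.2 q.2)
      else if ((q.1 : ℕ) = (p.1 : ℕ) + 1 ∧ (p.1 : ℕ) % 2 = 0) ∨
              ((p.1 : ℕ) = (q.1 : ℕ) + 1 ∧ (q.1 : ℕ) % 2 = 0) then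
        (if p.2 = q.2 then -1 else 0)
      else if ((q.1 : ℕ) = (p.1 : ℕ) + 1 ∧ (p.1 : ℕ) % 2 = 1) ∨
              ((p.1 : ℕ) = (q.1 : ℕ) + 1 ∧ (q.1 : ℕ) % 2 = 1) then
        (if p.2 = q.2 then X else 0)
      else 0)
    (Pc : Matrix (Fin k × Fin n) (Fin k × Fin n) (Polynomial F))
    (hPc : Pc = Matrix.of fun p q =>
      if (p.1 : ℕ) = (if (q.1 : ℕ) ≤ s then 2 * (q.1 : ℕ)
                      else 2 * ((q.1 : ℕ) - s) - 1) ∧ p.2 = q.2 then 1 else 0)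
    (O1 : Matrix (Fin k × Fin n) (Fin k × Fin n) (Polynomial F))
    (hO1 : O1 = Matrix.of fun p q =>
      if (p.1 : ℕ) ≤ s ∧ (q.1 : ℕ) ≤ s then
        (if (p.1 : ℕ) = (q.1 : ℕ) then
          X * C (A (k - 2 * (p.1 : ℕ)) p.2 q.2) +
            C (A (k - 1 - 2 * (p.1 : ℕ)) p.2 q.2)
        else 0)
      else if (p.1 : ℕ) ≤ s then
        (if p.2 = q.2 then
          (if (p.1 : ℕ) = (q.1 : ℕ) - (s + 1) then -1
           else if (p.1 : ℕ) = (q.1 : ℕ) - s then X else 0)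
         else 0)
      else if (q.1 : ℕ) ≤ s then
        (if p.2 = q.2 then
          (if (q.1 : ℕ) = (p.1 : ℕ) - (s + 1) then -1
           else if (q.1 : ℕ) = (p.1 : ℕ) - s then X else 0)
         else 0)
      else 0) :
    blockT Pc * T * Pc = O1 :=
  stmt19_general F n k s hk A T hT Pc hPc O1 hO1
end
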